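/- arXiv:2204.06023 — 5 statements merged into one kernel-verified Lean document; each statement's English description precedes it below -/
import Mathlib

section
/- Let n and r be positive integers, and let L_n(r) be the largest integer k such that (x-1)^k divides x^{n^r} - 1 in the polynomial ring Z/nZ[x]. Then L_n(2r) ≥ L_n(r)^2. -/
open Polynomial

/-- For `n, r` positive, if `a = L_n(r)` is the largest `k` with `(X-1)^k ∣ X^(n^r) - 1`
in `(ZMod n)[X]`, and `b = L_n(2r)` likewise, then `b ≥ a^2`. -/
theorem stmt_0 (n r : ℕ) (hn : 0 < n) (hr : 0 < r) (a b : ℕ)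
    (ha : IsGreatest {k : ℕ | ((X : (ZMod n)[X]) - 1) ^ k ∣ X ^ (n ^ r) - 1} a)
    (hb : IsGreatest {k : ℕ | ((X : (ZMod n)[X]) - 1) ^ k ∣ X ^ (n ^ (2 * r)) - 1} b) :
    a ^ 2 ≤ b := by
  apply hb.2
  have h1 := ha.1
  have h2 : ((X : (ZMod n)[X]) ^ (n ^ r) - 1) ^ a ∣ (X ^ (n ^ r)) ^ (n ^ r) - 1 := by
    have := map_dvd (aeval (X ^ (n ^ r) : (ZMod n)[X])) h1
    simpa using this
  have h3 : ((X : (ZMod n)[X]) - 1) ^ (a ^ 2) ∣ (X ^ (n ^ r) - 1) ^ a := by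
    rw [pow_two, pow_mul]
    exact pow_dvd_pow_of_dvd h1 a
  have key : (X : (ZMod n)[X]) ^ (n ^ (2 * r)) - 1 = (X ^ (n ^ r)) ^ (n ^ r) - 1 := by
    rw [← pow_mul, ← pow_add, two_mul]
  rw [Set.mem_setOf_eq, key]
  exact h3.trans h2
end

section
/- Let R be a commutative ring, M an R-module, and ω : M × M → R a Z-bilinear pairing satisfying ω(m,m)_0 = 0 for all m, where for r in a group ring R = (ZMod n)[Λ] we write r_0 for the coefficient of the identity, and ω(x^λ m, m') = x^{-λ} ω(m,m'), ω(m, x^λ m') = x^λ ω(m,m'). Then ω(m,m') = -overline{ω(m',m)} for all m, m', where overline denotes the antipode r ↦ ∑ r_λ x^{-λ}. -/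
/-- In the group ring `R = (ZMod n)[Λ]`, the antipode `r ↦ ∑ r_λ x^{-λ}`. -/
noncomputable def antipode {n : ℕ} {Λ : Type*} [AddCommGroup Λ]
    (r : AddMonoidAlgebra (ZMod n) Λ) : AddMonoidAlgebra (ZMod n) Λ :=
  AddMonoidAlgebra.ofCoeff (Finsupp.mapDomain (fun l => -l) r.coeff)

theorem add_swap_eq_zero_of_self_eq_zero {M B : Type*} [Add M] [AddCommMonoid B]
    (β : M → M → B) (hadd₁ : ∀ x y m, β (x + y) m = β x m + β y m)
    (hadd₂ : ∀ x m m', β x (m + m') = β x m + β x m') (halt : ∀ m, β m m = 0) (x y : M) :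
    β x y + β y x = 0 := by
  simpa [hadd₁, hadd₂, halt, add_assoc] using halt (x + y)

namespace AddMonoidAlgebra

theorem coeff_zero_single_one_mul {k G : Type*} [Semiring k] [AddGroup G]
    (g : G) (r : AddMonoidAlgebra k G) : (single g 1 * r).coeff 0 = r.coeff (-g) := by
  rw [coeff_single_mul_apply, one_mul, add_zero]

end AddMonoidAlgebra

section Antipode

open AddMonoidAlgebra

variable {n : ℕ} {Λ : Type*} [AddCommGroup Λ]

theorem coeff_antipode (r : AddMonoidAlgebra (ZMod n) Λ) (l : Λ) :
    (antipode r).coeff l = r.coeff (-l) := by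
  rw [← neg_neg l, neg_neg (-l)]
  exact Finsupp.mapDomain_apply neg_injective r.coeff (-l)

theorem antipode_single (l : Λ) (c : ZMod n) : antipode (single l c) = single (-l) c :=
  congrArg ofCoeff Finsupp.mapDomain_single

end Antipode

theorem stmt_8_general (n : ℕ) (Λ : Type*) [AddCommGroup Λ]
    (M : Type*) [AddCommGroup M] [Module (AddMonoidAlgebra (ZMod n) Λ) M]
    (ω : M → M → AddMonoidAlgebra (ZMod n) Λ)
    (hadd₁ : ∀ x y m, ω (x + y) m = ω x m + ω y m)
    (hadd₂ : ∀ x m m', ω x (m + m') = ω x m + ω x m')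
    (hses₁ : ∀ (r : AddMonoidAlgebra (ZMod n) Λ) m m', ω (r • m) m' = antipode r * ω m m')
    (hses₂ : ∀ (r : AddMonoidAlgebra (ZMod n) Λ) m m', ω m (r • m') = r * ω m m')
    (halt : ∀ m, (ω m m).coeff 0 = 0) :
    ∀ m m', ω m m' = - antipode (ω m' m) := by
  intro m m'
  ext l
  -- Pairing `m` against `x^{-l} m'` moves the coefficient at `l` to the scalar part.
  have h := add_swap_eq_zero_of_self_eq_zero (fun x y => (ω x y).coeff 0)
    (fun x y m => by simp only [hadd₁, AddMonoidAlgebra.coeff_add, Finsupp.add_apply])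
    (fun x m m' => by simp only [hadd₂, AddMonoidAlgebra.coeff_add, Finsupp.add_apply])
    halt m (AddMonoidAlgebra.single (-l) (1 : ZMod n) • m')
  simp only [hses₁, hses₂, antipode_single,
    AddMonoidAlgebra.coeff_zero_single_one_mul, neg_neg] at h
  rw [AddMonoidAlgebra.coeff_neg, Finsupp.neg_apply, coeff_antipode]
  exact eq_neg_of_add_eq_zero_left h

/-- If `ω : M × M → R` is a ℤ-bilinear, antipode-sesquilinear pairing on a module `M` over
the group ring `R = (ZMod n)[Λ]` whose scalar part is alternating (`(ω m m)_0 = 0`), then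
`ω(m, m') = - overline{ω(m', m)}`. -/
theorem stmt_8 (n : ℕ) (Λ : Type*) [AddCommGroup Λ] [AddGroup.FG Λ]
    (M : Type*) [AddCommGroup M] [Module (AddMonoidAlgebra (ZMod n) Λ) M]
    (ω : M → M → AddMonoidAlgebra (ZMod n) Λ)
    (hadd₁ : ∀ x y m, ω (x + y) m = ω x m + ω y m)
    (hadd₂ : ∀ x m m', ω x (m + m') = ω x m + ω x m')
    (hses₁ : ∀ (r : AddMonoidAlgebra (ZMod n) Λ) m m', ω (r • m) m' = antipode r * ω m m')
    (hses₂ : ∀ (r : AddMonoidAlgebra (ZMod n) Λ) m m', ω m (r • m') = r * ω m m')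
    (halt : ∀ m, (ω m m).coeff 0 = 0) :
    ∀ m m', ω m m' = - antipode (ω m' m) :=
  stmt_8_general n Λ M ω hadd₁ hadd₂ hses₁ hses₂ halt
end

section
/- Let Λ be a finite abelian group and n ≥ 1. Then the group ring R = (ZMod n)[Λ] is a self-injective ring, i.e., R is injective as a module over itself. -/
/-!
Both rings are shown to satisfy Baer's criterion. In a quotient `R/(n)` of a principal ideal
domain, such as `ZMod n`, an ideal is generated by the image of a divisor `d` of `n`, and a
homomorphism from it sends `d` to an element killed by `n/d`, hence to a multiple of `d`.
For the group ring `k[G]` of a finite group, the pairing `(x, y) ↦ coeff 0 (x * y)` is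
nondegenerate and identifies `k[G]` with its `k`-dual. A homomorphism `g : I → k[G]` on an ideal
gives the `k`-linear functional `coeff 0 ∘ g` on `I`, which extends to `k[G]` by self-injectivity
of `k`; the element `r` representing the extension satisfies `g x = x * r` on `I`.
-/

theorem Ideal.Quotient.baer_self_span_singleton {R : Type*} [CommRing R] [IsDomain R]
    [IsPrincipalIdealRing R] {n : R} (hn : n ≠ 0) :
    Module.Baer (R ⧸ Ideal.span {n}) (R ⧸ Ideal.span {n}) := by
  intro I g
  set π := Ideal.Quotient.mk (Ideal.span {n})
  obtain ⟨d, hd⟩ : ∃ d, I.comap π = Ideal.span {d} :=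
    ⟨_, (Submodule.IsPrincipal.span_singleton_generator _).symm⟩
  have mem_iff (m : R) : π m ∈ I ↔ d ∣ m := by rw [← Ideal.mem_comap, hd, Ideal.mem_span_singleton]
  have hdI : π d ∈ I := (mem_iff d).2 dvd_rfl
  obtain ⟨e, hde⟩ : d ∣ n := (mem_iff n).1 (by simp [π])
  obtain ⟨β, hβ⟩ := Ideal.Quotient.mk_surjective (g ⟨π d, hdI⟩)
  obtain ⟨c, rfl⟩ : d ∣ β := by
    have hed : π e • (⟨π d, hdI⟩ : I) = 0 := Subtype.ext <| by
      simp [π, ← map_mul, mul_comm e, ← hde]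
    have : π (e * β) = 0 := by rw [map_mul, hβ, ← smul_eq_mul, ← map_smul, hed, map_zero]
    rw [Ideal.Quotient.eq_zero_iff_dvd, hde, mul_comm d] at this
    exact (mul_dvd_mul_iff_left (right_ne_zero_of_mul (hde ▸ hn))).1 this
  refine ⟨LinearMap.toSpanSingleton _ _ (π c), fun x hx ↦ ?_⟩
  obtain ⟨m, rfl⟩ := Ideal.Quotient.mk_surjective x
  obtain ⟨t, rfl⟩ := (mem_iff m).1 hx
  calc π (d * t) • π c = π t • g ⟨π d, hdI⟩ := by rw [← hβ]; simp only [map_mul, smul_eq_mul]; ring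
    _ = g ⟨π (d * t), hx⟩ := by rw [← map_smul]; congr 1; ext; simp [mul_comm]

theorem ZMod.baer_self (n : ℕ) [NeZero n] : Module.Baer (ZMod n) (ZMod n) :=
  let e := Int.quotientSpanNatEquivZMod n
  have : Module.Injective (ℤ ⧸ Ideal.span {(n : ℤ)}) (ℤ ⧸ Ideal.span {(n : ℤ)}) :=
    (Ideal.Quotient.baer_self_span_singleton (Int.natCast_ne_zero.2 (NeZero.ne n))).injective
  .of_injective (.of_ringEquiv e e.toSemilinearEquiv)

namespace AddMonoidAlgebra

variable {k G : Type*}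

theorem eq_zero_of_forall_coeff_zero_mul_eq_zero [Semiring k] [AddGroup G] {z : k[G]}
    (hz : ∀ y : k[G], (y * z).coeff 0 = 0) : z = 0 := by
  ext a
  simpa using hz (single (-a) 1)

theorem exists_coeff_zero_mul_eq [CommSemiring k] [AddGroup G] [Finite G]
    (φ : k[G] →ₗ[k] k) :
    ∃ r : k[G], ∀ x, (x * r).coeff 0 = φ x := by
  refine ⟨ofCoeff (Finsupp.equivFunOnFinite.symm fun a ↦ φ (single (-a) 1)), fun x ↦ ?_⟩
  induction x using AddMonoidAlgebra.induction_linear with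
  | zero => simp
  | add x y hx hy => simp [add_mul, hx, hy]
  | single a c =>
    have hc : single a c = c • single a (1 : k) := by simp
    rw [hc, map_smul]
    simp

theorem baer_self [CommRing k] [AddGroup G] [Finite G] (hk : Module.Baer k k) :
    Module.Baer k[G] k[G] := by
  intro I g
  let ε : k[G] →ₗ[k] k := Finsupp.lapply 0 ∘ₗ (coeffLinearEquiv k).toLinearMap
  obtain ⟨φ, hφ⟩ := hk.extension_property ((I.restrictScalars k).subtype)
    Subtype.val_injective (ε ∘ₗ g.restrictScalars k)
  obtain ⟨r, hr⟩ := exists_coeff_zero_mul_eq φ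
  refine ⟨LinearMap.toSpanSingleton _ _ r, fun x hx ↦ ?_⟩
  rw [LinearMap.toSpanSingleton_apply, smul_eq_mul, ← sub_eq_zero]
  refine eq_zero_of_forall_coeff_zero_mul_eq_zero fun y ↦ ?_
  have hgy : y * g ⟨x, hx⟩ = g ⟨y * x, I.mul_mem_left y hx⟩ := (g.map_smul y ⟨x, hx⟩).symm
  have hφyx : φ (y * x) = (g ⟨y * x, I.mul_mem_left y hx⟩).coeff 0 :=
    LinearMap.congr_fun hφ ⟨y * x, I.mul_mem_left y hx⟩
  rw [mul_sub, hgy, ← mul_assoc, coeff_sub, Finsupp.sub_apply, hr, hφyx, sub_self]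

end AddMonoidAlgebra

/-- For a finite abelian group `Λ` and `n ≥ 1`, the group ring `R = (ZMod n)[Λ]`
is self-injective: `R` is injective as a module over itself. -/
theorem stmt_10 (n : ℕ) [NeZero n] (Λ : Type*) [AddCommGroup Λ] [Finite Λ] :
    Module.Injective (AddMonoidAlgebra (ZMod n) Λ) (AddMonoidAlgebra (ZMod n) Λ) :=
  (AddMonoidAlgebra.baer_self (ZMod.baer_self n)).injective
end

section
/- Let A be a commutative ring. If an A-module M has a finite length resolution by projective modules and every projective A-module is free as a Z/nZ-module under a ring map Z/nZ → A (for example A = (ZMod n)[Λ] with n a prime power), then M is free as a Z/nZ-module. Specialize: if A = (ZMod p^t)[x, x^{-1}] (Laurent polynomials over Z/p^tZ) and M is an A-module of finite projective dimension, then the underlying Z/p^tZ-module of M is free. -/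
/-!
`R = ZMod (p ^ t)` is a local ring with nilpotent maximal ideal, so Nakayama's lemma holds for
all `R`-modules and every flat (in particular every projective) `R`-module is free. `R` is also
self-injective, hence free `R`-modules are injective. Since `A = R[T;T⁻¹]` is free over `R`,
the given resolution is a finite projective resolution of `M` over `R`. By induction on its
length the image `K` of `P 1 → P 0` is projective, hence injective, so `0 → K → P 0 → M → 0`
splits and `M` is `R`-projective, hence free.
-/

universe u v

open IsLocalRing TensorProduct

theorem Submodule.eq_top_of_sup_smul_top_eq_top {R M : Type*} [CommRing R] [AddCommGroup M]
    [Module R M] {I : Ideal R} (hI : IsNilpotent I) {N : Submodule R M}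
    (h : N ⊔ I • ⊤ = ⊤) : N = ⊤ := by
  obtain ⟨t, ht⟩ := hI
  have hpow (j : ℕ) : N ⊔ I ^ j • ⊤ = ⊤ := by
    induction j with
    | zero => rw [pow_zero, Ideal.one_eq_top, Submodule.top_smul, sup_top_eq]
    | succ j ih =>
      refine Eq.symm ?_
      calc ⊤ = N ⊔ I • ⊤ := h.symm
        _ = N ⊔ I • (N ⊔ I ^ j • ⊤) := by rw [ih]
        _ = N ⊔ I • N ⊔ I ^ (j + 1) • ⊤ := by
          rw [Submodule.smul_sup, ← Submodule.mul_smul, ← pow_succ', sup_assoc]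
        _ = N ⊔ I ^ (j + 1) • ⊤ := by rw [sup_eq_left.mpr (Submodule.smul_le_right : I • N ≤ N)]
  simpa [ht] using hpow t

theorem Module.free_of_flat_of_isNilpotent_maximalIdeal {R P : Type*} [CommRing R] [IsLocalRing R]
    (hR : IsNilpotent (maximalIdeal R)) [AddCommGroup P] [Module R P] [Module.Flat R P] :
    Module.Free R P := by
  let k := ResidueField R
  let w := Module.Free.chooseBasis k (k ⊗[R] P)
  obtain ⟨v, hv⟩ : ∃ v, TensorProduct.mk R k P 1 ∘ v = w :=
    (TensorProduct.mk_surjective R P k Ideal.Quotient.mk_surjective).comp_left w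
  have hmap : (Submodule.span R (Set.range v)).map (TensorProduct.mk R k P 1) = ⊤ := by
    rw [Submodule.map_span, ← Submodule.restrictScalars_span R k Ideal.Quotient.mk_surjective,
      Submodule.restrictScalars_eq_top_iff, ← Set.range_comp, hv, w.span_eq]
  have hker : LinearMap.ker (TensorProduct.mk R k P 1) = maximalIdeal R • ⊤ :=
    LinearMap.ker_tensorProductMk P
  have hspan : Submodule.span R (Set.range v) = ⊤ := by
    refine Submodule.eq_top_of_sup_smul_top_eq_top hR ?_
    rw [← hker, ← Submodule.comap_map_eq, hmap, Submodule.comap_top]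
  exact .of_basis <| .mk (IsLocalRing.linearIndependent_of_flat _ (hv ▸ w.linearIndependent))
    hspan.ge

theorem ZMod.isLocalRing_prime_pow {p t : ℕ} [Fact p.Prime] (ht : t ≠ 0) :
    IsLocalRing (ZMod (p ^ t)) :=
  have : Fact (1 < p ^ t) := ⟨Nat.one_lt_pow ht (Fact.out : p.Prime).one_lt⟩
  .of_surjective' (PadicInt.toZModPow t) (ZMod.ringHom_surjective _)

theorem ZMod.free_of_flat_prime_pow {p t : ℕ} [Fact p.Prime] (ht : t ≠ 0) (Q : Type*)
    [AddCommGroup Q] [Module (ZMod (p ^ t)) Q] [Module.Flat (ZMod (p ^ t)) Q] :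
    Module.Free (ZMod (p ^ t)) Q :=
  have := ZMod.isLocalRing_prime_pow (p := p) ht
  have : NeZero (p ^ t) := ⟨pow_ne_zero _ (Fact.out : p.Prime).ne_zero⟩
  Module.free_of_flat_of_isNilpotent_maximalIdeal
    ((isArtinianRing_iff_isNilpotent_maximalIdeal _).mp inferInstance)

theorem Module.Baer.of_isPrincipalIdealRing {R Q : Type*} [CommRing R] [IsPrincipalIdealRing R]
    [AddCommGroup Q] [Module R Q]
    (h : ∀ (a : R) (q : Q), (∀ s : R, s * a = 0 → s • q = 0) → ∃ e : Q, a • e = q) :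
    Module.Baer R Q := by
  intro I g
  obtain ⟨a, rfl⟩ := (IsPrincipalIdealRing.principal I).principal
  have ha : a ∈ Ideal.span {a} := Ideal.mem_span_singleton_self a
  obtain ⟨e, he⟩ := h a (g ⟨a, ha⟩) fun s hs => by
    rw [← map_smul, show s • (⟨a, ha⟩ : Ideal.span {a}) = 0 from Subtype.ext hs, map_zero]
  refine ⟨LinearMap.toSpanSingleton R Q e, fun x hx => ?_⟩
  obtain ⟨s, rfl⟩ := Ideal.mem_span_singleton'.mp hx
  rw [show (⟨s * a, hx⟩ : Ideal.span {a}) = s • ⟨a, ha⟩ from rfl, map_smul, ← he,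
    LinearMap.toSpanSingleton_apply, mul_smul]

namespace ZMod

instance {n : ℕ} : IsPrincipalIdealRing (ZMod n) :=
  .of_surjective (Int.castRingHom (ZMod n)) ZMod.intCast_surjective

variable {n : ℕ} [NeZero n]

theorem exists_eq_mul_of_annihilator_le {a c : ZMod n} (h : ∀ s : ZMod n, s * a = 0 → s * c = 0) :
    ∃ u : ZMod n, c = u * a := by
  obtain ⟨x, rfl⟩ := ZMod.intCast_surjective a
  obtain ⟨y, rfl⟩ := ZMod.intCast_surjective c
  obtain ⟨g, hg, ⟨q, hq⟩, ⟨x', hx'⟩⟩ : ∃ g : ℤ, g = x * x.gcdA n + n * x.gcdB n ∧ g ∣ n ∧ g ∣ x :=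
    ⟨_, Int.gcd_eq_gcd_ab x n, Int.gcd_dvd_right _ _, Int.gcd_dvd_left _ _⟩
  have hq0 : q ≠ 0 := by rintro rfl; exact NeZero.ne n (by simpa using hq)
  -- `q = n / g` kills `x`, hence kills `y`, which forces `g ∣ y`
  have hqy : (n : ℤ) ∣ q * y := by
    rw [← ZMod.intCast_zmod_eq_zero_iff_dvd, Int.cast_mul]
    refine h _ ?_
    rw [← Int.cast_mul, ZMod.intCast_zmod_eq_zero_iff_dvd, hx', hq]
    exact ⟨x', by ring⟩
  obtain ⟨m, rfl⟩ : g ∣ y :=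
    Int.dvd_of_mul_dvd_mul_right hq0 (by rwa [hq, mul_comm q] at hqy)
  refine ⟨(m * x.gcdA n : ℤ), ?_⟩
  rw [hg]
  push_cast
  rw [ZMod.natCast_self]
  ring

theorem baer_finsupp (ι : Type*) : Module.Baer (ZMod n) (ι →₀ ZMod n) := by
  refine Module.Baer.of_isPrincipalIdealRing fun a q hq => ?_
  choose u hu using fun i => exists_eq_mul_of_annihilator_le (a := a) (c := q i)
    fun s hs => by simpa using congrArg (· i) (hq s hs)
  refine ⟨q.support.sum fun i => Finsupp.single i (u i), ?_⟩
  rw [Finset.smul_sum]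
  conv_rhs => rw [← Finsupp.sum_single q]
  exact Finset.sum_congr rfl fun i _ => by rw [Finsupp.smul_single, smul_eq_mul, mul_comm, ← hu]

theorem injective_of_free (Q : Type*) [AddCommGroup Q] [Module (ZMod n) Q]
    [Module.Free (ZMod n) Q] : Module.Injective (ZMod n) Q :=
  ((baer_finsupp _).of_equiv (Module.Free.chooseBasis (ZMod n) Q).repr.symm).injective

end ZMod

theorem Module.Projective.trans {R A X : Type*} [CommRing R] [CommRing A] [Algebra R A]
    [Module.Projective R A] [AddCommGroup X] [Module R X] [Module A X] [IsScalarTower R A X]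
    [Module.Projective A X] : Module.Projective R X := by
  classical
  obtain ⟨s, hs⟩ := Module.projective_def'.mp ‹Module.Projective A X›
  have : Module.Projective R (X →₀ A) := .of_equiv (finsuppLEquivDirectSum R A X).symm
  refine .of_split (s.restrictScalars R) ((Finsupp.linearCombination A id).restrictScalars R) ?_
  ext x
  exact LinearMap.congr_fun hs x

theorem Module.Projective.of_exact_of_injective {R : Type u} [Ring R] {K P M : Type v}
    [AddCommGroup K] [Module R K] [AddCommGroup P] [Module R P] [AddCommGroup M] [Module R M]
    [Module.Injective R K] [Module.Projective R P] {f : K →ₗ[R] P} {g : P →ₗ[R] M}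
    (hf : Function.Injective f) (hg : Function.Surjective g) (hfg : Function.Exact f g) :
    Module.Projective R M := by
  obtain ⟨r, hr⟩ := Module.Injective.out f hf LinearMap.id
  obtain ⟨s, hs⟩ := ((hfg.split_tfae hf hg).out 0 1).mpr
    (⟨r, LinearMap.ext hr⟩ : ∃ r, r ∘ₗ f = LinearMap.id)
  exact .of_split s g hs

theorem Module.Projective.of_projective_resolution {R : Type u} [Ring R]
    (hinj : ∀ (Q : Type v) [AddCommGroup Q] [Module R Q] [Module.Projective R Q],
      Module.Injective R Q)
    (k : ℕ) {M : Type v} [AddCommGroup M] [Module R M]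
    {P : ℕ → Type v} [∀ i, AddCommGroup (P i)] [∀ i, Module R (P i)]
    [∀ i, Module.Projective R (P i)]
    (d : ∀ i : ℕ, P (i + 1) →ₗ[R] P i) (ε : P 0 →ₗ[R] M)
    (hsurj : Function.Surjective ε) (hexact0 : Function.Exact (d 0) ε)
    (hexact : ∀ i : ℕ, Function.Exact (d (i + 1)) (d i))
    (hfin : ∀ i ≥ k, Subsingleton (P i)) : Module.Projective R M := by
  induction k generalizing M P with
  | zero =>
    have := hfin 0 le_rfl
    have := hsurj.subsingleton
    infer_instance
  | succ k ih =>
    let K := LinearMap.range (d 0)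
    have : Module.Projective R K :=
      ih (fun i => d (i + 1)) (d 0).rangeRestrict (d 0).surjective_rangeRestrict
        (LinearMap.exact_iff.mpr (by rw [LinearMap.ker_rangeRestrict, (hexact 0).linearMap_ker_eq]))
        (fun i => hexact (i + 1)) (fun i hi => hfin (i + 1) (by omega))
    have := hinj K
    exact .of_exact_of_injective K.injective_subtype hsurj
      (LinearMap.exact_iff.mpr (by rw [Submodule.range_subtype, hexact0.linearMap_ker_eq]))

theorem Module.Projective.of_projective_resolution_of_isScalarTower {R A : Type*} [CommRing R]
    [CommRing A] [Algebra R A] [Module.Projective R A]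
    (hinj : ∀ (Q : Type v) [AddCommGroup Q] [Module R Q] [Module.Projective R Q],
      Module.Injective R Q)
    (k : ℕ) {M : Type v} [AddCommGroup M] [Module R M] [Module A M] [IsScalarTower R A M]
    {P : ℕ → Type v} [∀ i, AddCommGroup (P i)] [∀ i, Module R (P i)] [∀ i, Module A (P i)]
    [∀ i, IsScalarTower R A (P i)] [∀ i, Module.Projective A (P i)]
    (d : ∀ i : ℕ, P (i + 1) →ₗ[A] P i) (ε : P 0 →ₗ[A] M)
    (hsurj : Function.Surjective ε) (hexact0 : Function.Exact (d 0) ε)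
    (hexact : ∀ i : ℕ, Function.Exact (d (i + 1)) (d i))
    (hfin : ∀ i ≥ k, Subsingleton (P i)) : Module.Projective R M :=
  have (i : ℕ) : Module.Projective R (P i) := .trans (A := A)
  .of_projective_resolution hinj k (fun i => (d i).restrictScalars R) (ε.restrictScalars R)
    hsurj hexact0 hexact hfin

open LaurentPolynomial in
/-- If a module `M` over the Laurent polynomial ring `A = (ZMod p^t)[x, x⁻¹]` admits a
finite-length resolution by projective `A`-modules, then the underlying `ZMod p^t`-module
of `M` is free. -/
theorem stmt_17 (p t : ℕ) (hp : p.Prime) (ht : 1 ≤ t)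
    (M : Type) [AddCommGroup M] [Module (LaurentPolynomial (ZMod (p ^ t))) M]
    (P : ℕ → Type) [∀ i, AddCommGroup (P i)]
    [∀ i, Module (LaurentPolynomial (ZMod (p ^ t))) (P i)]
    [∀ i, Module.Projective (LaurentPolynomial (ZMod (p ^ t))) (P i)]
    (d : ∀ i : ℕ, P (i + 1) →ₗ[LaurentPolynomial (ZMod (p ^ t))] P i)
    (ε : P 0 →ₗ[LaurentPolynomial (ZMod (p ^ t))] M)
    (hsurj : Function.Surjective ε)
    (hexact0 : Function.Exact (d 0) ε)
    (hexact : ∀ i : ℕ, Function.Exact (d (i + 1)) (d i))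
    (k : ℕ) (hfin : ∀ i ≥ k, Subsingleton (P i)) :
    Module.Free (ZMod (p ^ t))
      (RestrictScalars (ZMod (p ^ t)) (LaurentPolynomial (ZMod (p ^ t))) M) := by
  have : Fact p.Prime := ⟨hp⟩
  have ht : t ≠ 0 := by omega
  -- not `RestrictScalars`, whose `AddCommGroup` and `AddCommMonoid` instances are not
  -- reducibly defeq, which breaks instance search for `Module R (RestrictScalars R A X)`
  let := Module.restrictScalars (ZMod (p ^ t)) (ZMod (p ^ t))[T;T⁻¹] M
  let (i : ℕ) := Module.restrictScalars (ZMod (p ^ t)) (ZMod (p ^ t))[T;T⁻¹] (P i)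
  have := IsScalarTower.restrictScalars (ZMod (p ^ t)) (ZMod (p ^ t))[T;T⁻¹] M
  have (i : ℕ) := IsScalarTower.restrictScalars (ZMod (p ^ t)) (ZMod (p ^ t))[T;T⁻¹] (P i)
  have : Module.Projective (ZMod (p ^ t)) M :=
    .of_projective_resolution_of_isScalarTower
      (fun Q _ _ _ => have := ZMod.free_of_flat_prime_pow (p := p) ht Q; ZMod.injective_of_free Q)
      k d ε hsurj hexact0 hexact hfin
  exact ZMod.free_of_flat_prime_pow ht M
end

section
/- Let Λ be a finitely generated abelian group of rank D, n ≥ 1, and R = (ZMod n)[Λ]. Let a ⊆ R be an ideal. If there exists a finite-index subgroup Γ ≤ Λ such that x^γ - 1 ∈ a for every γ ∈ Γ, then the quotient ring R/a is a finite ring. -/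
/-!
Since `x^(g + γ) - x^g = x^g (x^γ - 1)`, the image of `x^g` in `k[G] ⧸ I` depends only on the
class of `g` in `G ⧸ Γ`. Hence `k[G] ⧸ I` is spanned over `k` by finitely many elements, and a
finitely generated module over the finite ring `ZMod n` is finite.
-/

namespace AddMonoidAlgebra

variable {k G : Type*} [CommRing k] [AddCommGroup G] {I : Ideal k[G]} {Γ : AddSubgroup G}

theorem quotient_mk_single_eq_of_sub_mem (hI : ∀ γ ∈ Γ, single γ 1 - 1 ∈ I) {g g' : G}
    (hg : g - g' ∈ Γ) (r : k) :
    Ideal.Quotient.mk I (single g r) = Ideal.Quotient.mk I (single g' r) := by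
  rw [Ideal.Quotient.mk_eq_mk_iff_sub_mem]
  have hfactor : single g r - single g' r = single g' r * (single (g - g') 1 - 1) := by
    rw [mul_sub, mul_one, single_mul_single, mul_one, add_sub_cancel]
  exact hfactor ▸ I.mul_mem_left _ (hI _ hg)

theorem span_range_quotient_mk_single_out (hI : ∀ γ ∈ Γ, single γ 1 - 1 ∈ I) :
    Submodule.span k (Set.range fun c : G ⧸ Γ ↦ Ideal.Quotient.mk I (single c.out (1 : k))) =
      ⊤ := by
  let π := (Ideal.Quotient.mkₐ k I).toLinearMap
  have hsingle : ∀ g : G, π (single g 1) ∈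
      Submodule.span k (Set.range fun c : G ⧸ Γ ↦ Ideal.Quotient.mk I (single c.out (1 : k))) :=
    fun g ↦ Submodule.subset_span ⟨g, quotient_mk_single_eq_of_sub_mem hI
      (QuotientAddGroup.eq_iff_sub_mem.1 (QuotientAddGroup.out_eq' (g : G ⧸ Γ))) 1⟩
  refine eq_top_iff.2 ?_
  calc ⊤ = (⊤ : Submodule k k[G]).map π := by
        rw [Submodule.map_top, LinearMap.range_eq_top.2 (Ideal.Quotient.mkₐ_surjective k I)]
    _ = Submodule.span k (Set.range (π ∘ fun g : G ↦ single g 1)) := by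
        rw [← (AddMonoidAlgebra.basis G k).span_eq, Submodule.map_span, ← Set.range_comp]
        rfl
    _ ≤ _ := Submodule.span_le.2 (Set.range_subset_iff.2 hsingle)

theorem module_finite_quotient_of_single_sub_one_mem [Finite (G ⧸ Γ)]
    (hI : ∀ γ ∈ Γ, single γ 1 - 1 ∈ I) : Module.Finite k (k[G] ⧸ I) :=
  ⟨Submodule.fg_def.2 ⟨_, Set.finite_range _, span_range_quotient_mk_single_out hI⟩⟩

end AddMonoidAlgebra

theorem stmt_19_general (n : ℕ) [NeZero n] (Λ : Type*) [AddCommGroup Λ]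
    (a : Ideal (AddMonoidAlgebra (ZMod n) Λ))
    (Γ : AddSubgroup Λ) (hΓ : Finite (Λ ⧸ Γ))
    (h : ∀ γ ∈ Γ, (AddMonoidAlgebra.single γ (1 : ZMod n)
      - (1 : AddMonoidAlgebra (ZMod n) Λ)) ∈ a) :
    Finite (AddMonoidAlgebra (ZMod n) Λ ⧸ a) :=
  have := AddMonoidAlgebra.module_finite_quotient_of_single_sub_one_mem h
  Module.finite_of_finite (ZMod n)

/-- Let `Λ` be a finitely generated abelian group, `n ≥ 1`, `R = (ZMod n)[Λ]`, and
`a ⊆ R` an ideal. If there is a finite-index subgroup `Γ ≤ Λ` with `x^γ - 1 ∈ a` for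
all `γ ∈ Γ`, then `R/a` is a finite ring. -/
theorem stmt_19 (n : ℕ) [NeZero n] (Λ : Type*) [AddCommGroup Λ] [AddGroup.FG Λ]
    (a : Ideal (AddMonoidAlgebra (ZMod n) Λ))
    (Γ : AddSubgroup Λ) (hΓ : Finite (Λ ⧸ Γ))
    (h : ∀ γ ∈ Γ, (AddMonoidAlgebra.single γ (1 : ZMod n)
      - (1 : AddMonoidAlgebra (ZMod n) Λ)) ∈ a) :
    Finite (AddMonoidAlgebra (ZMod n) Λ ⧸ a) :=
  stmt_19_general n Λ a Γ hΓ h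
end
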